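/- Let G be a finite-dimensional non-abelian nilpotent Lie superalgebra. Then SDer_z(G) is abelian if and only if G is a stem Lie superalgebra, i.e., Z(G) ⊆ G¹. -/

import Mathlib

/-- A Lie superalgebra: a `ZMod 2`-graded vector space with a bilinear bracket that
respects the grading, is super skew-symmetric and satisfies the super Jacobi identity. -/
structure LieSuperAlg (K : Type*) [Field K] (L : Type*) [AddCommGroup L] [Module K L] where
  br : L →ₗ[K] L →ₗ[K] L
  grading : ZMod 2 → Submodule K L
  internal : DirectSum.IsInternal grading
  br_grade : ∀ (i j : ZMod 2), ∀ x ∈ grading i, ∀ y ∈ grading j, br x y ∈ grading (i + j)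
  skew : ∀ (i j : ZMod 2), ∀ x ∈ grading i, ∀ y ∈ grading j,
    br x y = -(((-1 : K) ^ (i.val * j.val)) • br y x)
  jacobi : ∀ (i j : ZMod 2), ∀ x ∈ grading i, ∀ y ∈ grading j, ∀ z : L,
    br x (br y z) = br (br x y) z + ((-1 : K) ^ (i.val * j.val)) • br y (br x z)

variable {K : Type*} [Field K] {L : Type*} {M : Type*} [AddCommGroup L] [Module K L]
  [AddCommGroup M] [Module K M]

/-- The center `Z(G)`. -/
def LieSuperAlg.center (S : LieSuperAlg K L) : Submodule K L where
  carrier := {x | ∀ g : L, S.br g x = 0}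
  add_mem' := by intro a b ha hb g; rw [map_add, ha g, hb g, add_zero]
  zero_mem' := by intro g; simp
  smul_mem' := by intro c a ha g; rw [map_smul, ha g, smul_zero]

/-- The derived subalgebra `G¹ = [G,G]`. -/
def LieSuperAlg.derived (S : LieSuperAlg K L) : Submodule K L :=
  Submodule.span K {z | ∃ x y : L, S.br x y = z}

/-- The lower central series `G⁰ = G`, `Gⁿ⁺¹ = [Gⁿ, G]`. -/
def LieSuperAlg.lcs (S : LieSuperAlg K L) : ℕ → Submodule K L
  | 0 => ⊤
  | n + 1 => Submodule.span K {z | ∃ x ∈ S.lcs n, ∃ y : L, S.br x y = z}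

/-- A superderivation of degree `α`. -/
def LieSuperAlg.IsSuperDer (S : LieSuperAlg K L) (α : ZMod 2) (T : L →ₗ[K] L) : Prop :=
  (∀ (i : ZMod 2), ∀ x ∈ S.grading i, T x ∈ S.grading (i + α)) ∧
  (∀ (i : ZMod 2), ∀ x ∈ S.grading i, ∀ y : L,
    T (S.br x y) = S.br (T x) y + ((-1 : K) ^ (α.val * i.val)) • S.br x (T y))

/-- A central derivation: a superderivation with image in the center. -/
def LieSuperAlg.IsCentralDer (S : LieSuperAlg K L) (α : ZMod 2) (T : L →ₗ[K] L) : Prop :=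
  S.IsSuperDer α T ∧ ∀ x : L, T x ∈ S.center

/-- The superbracket of two (homogeneous, of degrees `α`, `β`) linear endomorphisms. -/
def sbr (α β : ZMod 2) (T₁ T₂ : L →ₗ[K] L) : L →ₗ[K] L :=
  T₁ ∘ₗ T₂ - ((-1 : K) ^ (α.val * β.val)) • (T₂ ∘ₗ T₁)

lemma br_mem_derived (S : LieSuperAlg K L) (x y : L) : S.br x y ∈ S.derived :=
  Submodule.subset_span ⟨x, y, rfl⟩

/-- An isoclinism `(φ, θ)` between two Lie superalgebras. -/
structure Isoclinism (SG : LieSuperAlg K L) (SH : LieSuperAlg K M) where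
  φ : (L ⧸ SG.center) ≃ₗ[K] (M ⧸ SH.center)
  θ : SG.derived ≃ₗ[K] SH.derived
  φ_grade : ∀ (i : ZMod 2), ∀ x ∈ SG.grading i, ∃ h ∈ SH.grading i,
    φ (Submodule.Quotient.mk x) = Submodule.Quotient.mk h
  θ_grade : ∀ (i : ZMod 2), ∀ (x : L) (hx : x ∈ SG.derived), x ∈ SG.grading i →
    (θ ⟨x, hx⟩ : M) ∈ SH.grading i
  compat : ∀ (x y : L) (h k : M),
    φ (Submodule.Quotient.mk x) = Submodule.Quotient.mk h →
    φ (Submodule.Quotient.mk y) = Submodule.Quotient.mk k →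
    (θ ⟨SG.br x y, br_mem_derived SG x y⟩ : M) = SH.br h k

/-!
If `Z(G) ⊆ G¹`, every central derivation kills `G¹` (the Leibniz rule turns `T[x,y]` into
brackets with central elements) and takes values in `Z(G) ⊆ G¹`, so any composite of two of them
vanishes. Conversely, if a homogeneous central `z` of degree `d` lies outside `G¹`, pick a linear
form `g` with `g z = 1` vanishing on `G¹ + G_{d+1}`, and a nonzero homogeneous `c ∈ Z(G) ∩ G¹`,
which exists since the last nonzero term of the lower central series is central and lies in `G¹`.
Then `x ↦ g(x) c` and `x ↦ g(x) z` are central derivations whose superbracket sends `z` to `c`.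
-/

lemma Submodule.exists_dual_eq_one_le_ker {V : Type*} [AddCommGroup V] [Module K V]
    {p : Submodule K V} {x : V} (hx : x ∉ p) :
    ∃ f : Module.Dual K V, f x = 1 ∧ p ≤ LinearMap.ker f := by
  obtain ⟨f, hf⟩ := Module.Projective.exists_dual_eq_one K (x := p.mkQ x) (by simpa using hx)
  exact ⟨f ∘ₗ p.mkQ, hf, fun y hy => by simp [(Submodule.Quotient.mk_eq_zero p).mpr hy]⟩

lemma ZMod.two_eq_or_eq_add_one (i d : ZMod 2) : i = d ∨ i = d + 1 := by
  revert i d; decide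

namespace LieSuperAlg

variable (S : LieSuperAlg K L)

@[elab_as_elim]
lemma induction_on {motive : L → Prop} (x : L) (mem : ∀ i, ∀ y ∈ S.grading i, motive y)
    (add : ∀ y z, motive y → motive z → motive (y + z)) : motive x :=
  Submodule.iSup_induction (motive := motive) S.grading
    (S.internal.submodule_iSup_eq_top ▸ Submodule.mem_top) mem (mem 0 0 (zero_mem _)) add

lemma isCompl_grading (d : ZMod 2) : IsCompl (S.grading d) (S.grading (d + 1)) :=
  S.internal.isCompl (by simp) <| by
    ext i; simpa using ZMod.two_eq_or_eq_add_one i d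

lemma exists_add_eq (d : ZMod 2) (x : L) :
    ∃ a ∈ S.grading d, ∃ b ∈ S.grading (d + 1), a + b = x :=
  Submodule.mem_sup.mp ((S.isCompl_grading d).sup_eq_top ▸ Submodule.mem_top)

variable {S}

lemma eq_zero_of_add_eq_zero {d : ZMod 2} {a b : L} (ha : a ∈ S.grading d)
    (hb : b ∈ S.grading (d + 1)) (h : a + b = 0) : a = 0 ∧ b = 0 := by
  have ha0 : a = 0 := Submodule.disjoint_def.mp (S.isCompl_grading d).disjoint a ha
    (eq_neg_of_add_eq_zero_left h ▸ neg_mem hb)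
  exact ⟨ha0, by simpa [ha0] using h⟩

def IsHomogeneous (P : Submodule K L) : Prop :=
  ∀ d : ZMod 2, ∀ a ∈ S.grading d, ∀ b ∈ S.grading (d + 1), a + b ∈ P → a ∈ P

namespace IsHomogeneous

variable {P Q : Submodule K L}

lemma of_le_sup (h : ∀ d, P ≤ P ⊓ S.grading d ⊔ P ⊓ S.grading (d + 1)) : S.IsHomogeneous P := by
  intro d a ha b hb hab
  obtain ⟨a', ⟨ha'P, ha'⟩, b', ⟨-, hb'⟩, hab'⟩ := Submodule.mem_sup.mp (h d hab)
  have hsum : (a - a') + (b - b') = 0 := by rw [← sub_eq_zero.mpr hab'.symm]; abel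
  rwa [sub_eq_zero.mp (eq_zero_of_add_eq_zero (sub_mem ha ha') (sub_mem hb hb') hsum).1]

lemma inf (hP : S.IsHomogeneous P) (hQ : S.IsHomogeneous Q) : S.IsHomogeneous (P ⊓ Q) :=
  fun d a ha b hb hab => ⟨hP d a ha b hb hab.1, hQ d a ha b hb hab.2⟩

lemma exists_mem_grading_notMem (hP : S.IsHomogeneous P) (h : ¬ P ≤ Q) :
    ∃ d, ∃ x ∈ P, x ∈ S.grading d ∧ x ∉ Q := by
  obtain ⟨x, hxP, hxQ⟩ := SetLike.not_le_iff_exists.mp h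
  obtain ⟨a, ha, b, hb, rfl⟩ := S.exists_add_eq 0 x
  have haP := hP 0 a ha b hb hxP
  by_cases haQ : a ∈ Q
  · exact ⟨0 + 1, b, (Submodule.add_mem_iff_right P haP).mp hxP, hb,
      fun hbQ => hxQ (add_mem haQ hbQ)⟩
  · exact ⟨0, a, haP, ha, haQ⟩

lemma le_of_forall_mem_grading (hP : S.IsHomogeneous P)
    (h : ∀ d, ∀ x ∈ P, x ∈ S.grading d → x ∈ Q) : P ≤ Q := by
  by_contra hPQ
  obtain ⟨d, x, hxP, hx, hxQ⟩ := hP.exists_mem_grading_notMem hPQ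
  exact hxQ (h d x hxP hx)

/-- Written as `z = u + (-v)`, an element `u ∈ P` would have `z` as its degree-`d` component. -/
lemma notMem_sup_grading (hP : S.IsHomogeneous P) {d : ZMod 2} {z : L}
    (hz : z ∈ S.grading d) (hzP : z ∉ P) : z ∉ P ⊔ S.grading (d + 1) := by
  intro hz'
  obtain ⟨u, hu, v, hv, rfl⟩ := Submodule.mem_sup.mp hz'
  exact hzP (hP d _ hz (-v) (neg_mem hv) (by simpa using hu))

end IsHomogeneous

lemma isHomogeneous_ker (f : L →ₗ[K] L →ₗ[K] L)
    (hf : ∀ i j, ∀ x ∈ S.grading i, ∀ y ∈ S.grading j, f x y ∈ S.grading (i + j)) :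
    S.IsHomogeneous (LinearMap.ker f) := by
  intro d a ha b hb hab
  rw [LinearMap.mem_ker] at hab ⊢
  ext y
  induction y using S.induction_on with
  | mem j y hy =>
    have hby : f b y ∈ S.grading (d + j + 1) := add_right_comm d 1 j ▸ hf _ j b hb y hy
    exact (eq_zero_of_add_eq_zero (hf d j a ha y hy) hby
      (by rw [← LinearMap.add_apply, ← map_add, hab, LinearMap.zero_apply])).1
  | add y z hy hz => simp only [map_add, hy, hz, LinearMap.zero_apply, add_zero]

lemma center_eq_ker_flip : S.center = LinearMap.ker S.br.flip := by
  ext x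
  simp [center, LinearMap.ext_iff]

lemma isHomogeneous_center : S.IsHomogeneous S.center := by
  rw [center_eq_ker_flip]
  refine isHomogeneous_ker S.br.flip fun i j x hx y hy => ?_
  rw [LinearMap.flip_apply, add_comm]
  exact S.br_grade j i y hy x hx

lemma br_eq_zero_iff_br_swap {i j : ZMod 2} {x y : L} (hx : x ∈ S.grading i)
    (hy : y ∈ S.grading j) : S.br x y = 0 ↔ S.br y x = 0 := by
  simp [S.skew i j x hx y hy]

lemma forall_br_eq_zero_iff_swap {i : ZMod 2} {x : L} (hx : x ∈ S.grading i) :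
    (∀ y, S.br x y = 0) ↔ ∀ y, S.br y x = 0 := by
  refine ⟨fun h y => ?_, fun h y => ?_⟩
  · induction y using S.induction_on with
    | mem j y hy => exact (br_eq_zero_iff_br_swap hx hy).mp (h y)
    | add y z hy hz => simp [hy, hz]
  · induction y using S.induction_on with
    | mem j y hy => exact (br_eq_zero_iff_br_swap hx hy).mpr (h y)
    | add y z hy hz => simp [hy, hz]

lemma center_eq_ker : S.center = LinearMap.ker S.br := by
  have hker : S.IsHomogeneous (LinearMap.ker S.br) := isHomogeneous_ker S.br S.br_grade
  refine le_antisymm (isHomogeneous_center.le_of_forall_mem_grading fun d x hx hxd => ?_)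
    (hker.le_of_forall_mem_grading fun d x hx hxd y => ?_)
  · exact LinearMap.ext ((forall_br_eq_zero_iff_swap hxd).mpr hx)
  · exact (forall_br_eq_zero_iff_swap hxd).mp (LinearMap.congr_fun hx) y

lemma br_eq_zero_of_mem_center {z : L} (hz : z ∈ S.center) (y : L) : S.br z y = 0 :=
  LinearMap.congr_fun (center_eq_ker (S := S) ▸ hz) y

lemma isHomogeneous_derived : S.IsHomogeneous S.derived := by
  refine IsHomogeneous.of_le_sup fun d => Submodule.span_le.mpr ?_
  rintro _ ⟨x, y, rfl⟩
  induction x using S.induction_on with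
  | mem i x hx =>
    induction y using S.induction_on with
    | mem j y hy =>
      have hxy := S.br_grade i j x hx y hy
      rcases ZMod.two_eq_or_eq_add_one (i + j) d with h | h
      · exact Submodule.mem_sup_left ⟨br_mem_derived S x y, h ▸ hxy⟩
      · exact Submodule.mem_sup_right ⟨br_mem_derived S x y, h ▸ hxy⟩
    | add y z hy hz => rw [SetLike.mem_coe, map_add]; exact add_mem hy hz
  | add x z hx hz => rw [SetLike.mem_coe, map_add, LinearMap.add_apply]; exact add_mem hx hz

lemma lcs_one : S.lcs 1 = S.derived := by
  simp [lcs, derived]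

lemma lcs_succ_le_derived (n : ℕ) : S.lcs (n + 1) ≤ S.derived :=
  Submodule.span_mono fun _ ⟨x, _, y, hxy⟩ => ⟨x, y, hxy⟩

lemma lcs_succ_eq_bot {n : ℕ} (h : S.lcs n = ⊥) : S.lcs (n + 1) = ⊥ := by
  refine eq_bot_iff.mpr (Submodule.span_le.mpr ?_)
  rintro _ ⟨x, hx, y, rfl⟩
  rw [h, Submodule.mem_bot] at hx
  simp [hx]

lemma lcs_le_center {n : ℕ} (h : S.lcs (n + 1) = ⊥) : S.lcs n ≤ S.center := by
  intro x hx
  rw [center_eq_ker, LinearMap.mem_ker]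
  ext y
  have hxy : S.br x y ∈ S.lcs (n + 1) := Submodule.subset_span ⟨x, hx, y, rfl⟩
  rwa [h, Submodule.mem_bot] at hxy

lemma center_inf_derived_ne_bot (hnil : ∃ n, S.lcs n = ⊥) (hnab : S.derived ≠ ⊥) :
    S.center ⊓ S.derived ≠ ⊥ := by
  obtain ⟨n, hn⟩ := hnil
  replace hn := S.lcs_succ_eq_bot hn
  induction n with
  | zero => exact absurd (S.lcs_one ▸ hn) hnab
  | succ n ih =>
    by_cases h : S.lcs (n + 1) = ⊥
    · exact ih h
    · have hle : S.lcs (n + 1) ≤ S.center ⊓ S.derived :=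
        le_inf (S.lcs_le_center hn) (S.lcs_succ_le_derived n)
      exact fun hbot => h (eq_bot_iff.mpr (hbot ▸ hle))

lemma IsCentralDer.derived_le_ker {α : ZMod 2} {T : L →ₗ[K] L} (hT : S.IsCentralDer α T) :
    S.derived ≤ LinearMap.ker T := by
  refine Submodule.span_le.mpr ?_
  rintro _ ⟨x, y, rfl⟩
  induction x using S.induction_on with
  | mem i x hx =>
    simp [hT.1.2 i x hx y, br_eq_zero_of_mem_center (hT.2 x), hT.2 y x]
  | add x z hx hz => rw [SetLike.mem_coe, map_add, LinearMap.add_apply]; exact add_mem hx hz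

lemma sbr_eq_zero_of_center_le_derived (h : S.center ≤ S.derived) {α β : ZMod 2}
    {T₁ T₂ : L →ₗ[K] L} (hT₁ : S.IsCentralDer α T₁) (hT₂ : S.IsCentralDer β T₂) :
    sbr α β T₁ T₂ = 0 := by
  ext x
  have h₁₂ : T₁ (T₂ x) = 0 := hT₁.derived_le_ker (h (hT₂.2 x))
  have h₂₁ : T₂ (T₁ x) = 0 := hT₂.derived_le_ker (h (hT₁.2 x))
  simp [sbr, h₁₂, h₂₁]

lemma isCentralDer_smulRight {d e : ZMod 2} {g : Module.Dual K L} {w : L}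
    (hg : S.derived ⊔ S.grading (d + 1) ≤ LinearMap.ker g) (hw : w ∈ S.center)
    (hwe : w ∈ S.grading e) : S.IsCentralDer (e - d) (g.smulRight w) := by
  obtain ⟨hgd, hgodd⟩ := sup_le_iff.mp hg
  refine ⟨⟨fun i x hx => ?_, fun i x hx y => ?_⟩, fun x => S.center.smul_mem _ hw⟩
  · rcases ZMod.two_eq_or_eq_add_one i d with rfl | rfl
    · simpa using (S.grading e).smul_mem (g x) hwe
    · simp [LinearMap.mem_ker.mp (hgodd hx)]
  · simp [LinearMap.mem_ker.mp (hgd (br_mem_derived S x y)), br_eq_zero_of_mem_center hw, hw x]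

lemma center_le_derived_of_sbr_eq_zero (hnil : ∃ n, S.lcs n = ⊥) (hnab : S.derived ≠ ⊥)
    (h : ∀ (α β : ZMod 2) (T₁ T₂ : L →ₗ[K] L), S.IsCentralDer α T₁ → S.IsCentralDer β T₂ →
      sbr α β T₁ T₂ = 0) :
    S.center ≤ S.derived := by
  by_contra hZ
  obtain ⟨d, z, hzZ, hzd, hzG⟩ := isHomogeneous_center.exists_mem_grading_notMem hZ
  obtain ⟨e, c, ⟨hcZ, hcG⟩, hce, hc0⟩ :=
    (isHomogeneous_center.inf isHomogeneous_derived).exists_mem_grading_notMem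
      (mt le_bot_iff.mp (S.center_inf_derived_ne_bot hnil hnab))
  obtain ⟨g, hgz, hg⟩ :=
    Submodule.exists_dual_eq_one_le_ker (isHomogeneous_derived.notMem_sup_grading hzd hzG)
  have hsbr := LinearMap.congr_fun (h _ _ _ _ (isCentralDer_smulRight hg hcZ hce)
    (isCentralDer_smulRight hg hzZ hzd)) z
  have hgc : g c = 0 := hg (Submodule.mem_sup_left hcG)
  exact hc0 (by simpa [sbr, hgz, hgc] using hsbr)

end LieSuperAlg

theorem stmt4_general (S : LieSuperAlg K L)
    (hnil : ∃ n, S.lcs n = ⊥) (hnab : S.derived ≠ ⊥) :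
    (∀ (α β : ZMod 2) (T₁ T₂ : L →ₗ[K] L), S.IsCentralDer α T₁ → S.IsCentralDer β T₂ →
      sbr α β T₁ T₂ = 0) ↔ S.center ≤ S.derived :=
  ⟨S.center_le_derived_of_sbr_eq_zero hnil hnab,
    fun h _ _ _ _ => S.sbr_eq_zero_of_center_le_derived h⟩

/-- For a finite-dimensional non-abelian nilpotent Lie superalgebra `G`,
`SDer_z(G)` is abelian iff `G` is stem. -/
theorem stmt4 (S : LieSuperAlg K L) [Module.Finite K L]
    (hnil : ∃ n, S.lcs n = ⊥) (hnab : S.derived ≠ ⊥) :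
    (∀ (α β : ZMod 2) (T₁ T₂ : L →ₗ[K] L), S.IsCentralDer α T₁ → S.IsCentralDer β T₂ →
      sbr α β T₁ T₂ = 0) ↔ S.center ≤ S.derived :=
  stmt4_general S hnil hnab
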